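/- In the trivial jet bundle setting, the decomposable m-multivector field X = X_1 ∧ … ∧ X_m with X_j = ∂/∂x^j + u_j^α ∂/∂u^α + F_{j,i}^α ∂/∂u_i^α (a semi-holonomic multivector field) has involutive associated distribution if and only if the component functions satisfy, for all j < k: F_{j,k}^α = F_{k,j}^α and ∂F_{k,i}^α/∂x^j + u_j^β ∂F_{k,i}^α/∂u^β + F_{j,l}^β ∂F_{k,i}^α/∂u_l^β − ∂F_{j,i}^α/∂x^k − u_k^β ∂F_{j,i}^α/∂u^β − F_{k,l}^β ∂F_{j,i}^α/∂u_l^β = 0; equivalently, the pairwise Lie brackets [X_j, X_k] all vanish. -/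

import Mathlib

/-- Points of the jet bundle `J¹π = ℝ^m × ℝ^n × ℝ^{mn}`, coordinates `(x^i, u^α, u_i^α)`. -/
abbrev JetPt (m n : ℕ) := (Fin m → ℝ) × (Fin n → ℝ) × (Fin n → Fin m → ℝ)

/-- The semi-holonomic coordinate vector fields
`X_j = ∂/∂x^j + u_j^α ∂/∂u^α + F_{j,i}^α ∂/∂u_i^α`. -/
noncomputable def XSOPDE {m n : ℕ} (F : Fin m → Fin m → Fin n → JetPt m n → ℝ) (j : Fin m) :
    JetPt m n → JetPt m n :=
  fun p => (Pi.single j 1, fun α => p.2.2 α j, fun α i => F j i α p)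

noncomputable def L2aux {m n : ℕ} (k : Fin m) : JetPt m n →L[ℝ] (Fin n → ℝ) :=
  ContinuousLinearMap.pi fun α =>
    (ContinuousLinearMap.proj k).comp
      ((ContinuousLinearMap.proj α).comp
        ((ContinuousLinearMap.snd ℝ (Fin n → ℝ) (Fin n → Fin m → ℝ)).comp
          (ContinuousLinearMap.snd ℝ (Fin m → ℝ) ((Fin n → ℝ) × (Fin n → Fin m → ℝ)))))

lemma fderiv_XSOPDE {m n : ℕ} (F : Fin m → Fin m → Fin n → JetPt m n → ℝ)
    (hF : ∀ j i α, ContDiff ℝ (⊤ : ℕ∞) (F j i α)) (k : Fin m) (p v : JetPt m n) :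
    fderiv ℝ (XSOPDE F k) p v =
      (0, fun α => v.2.2 α k, fun α i => fderiv ℝ (F k i α) p v) := by
  have h : HasFDerivAt (XSOPDE F k)
      (((0 : JetPt m n →L[ℝ] (Fin m → ℝ))).prod
        ((L2aux k).prod (ContinuousLinearMap.pi fun α =>
          ContinuousLinearMap.pi fun i => fderiv ℝ (F k i α) p))) p := by
    exact HasFDerivAt.prodMk (hasFDerivAt_const _ _)
      (HasFDerivAt.prodMk (L2aux (m := m) (n := n) k).hasFDerivAt
        (hasFDerivAt_pi.2 fun α => hasFDerivAt_pi.2 fun i =>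
          ((hF k i α).differentiable (by simp) p).hasFDerivAt))
  rw [h.fderiv]
  rfl

lemma expandL {m n : ℕ} (L : JetPt m n →L[ℝ] ℝ) (v : JetPt m n) :
    L v = L (v.1, 0, 0) + (∑ β, v.2.1 β * L (0, (Pi.single β 1 : Fin n → ℝ), 0))
      + (∑ β, ∑ l, v.2.2 β l * L (0, 0, (Pi.single β (Pi.single l 1) : Fin n → Fin m → ℝ))) := by
  have hv : v = (v.1, 0, 0) + ((0 : Fin m → ℝ), v.2.1, 0) + ((0 : Fin m → ℝ), 0, v.2.2) := by
    obtain ⟨a, b, c⟩ := v; simp [Prod.ext_iff]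
  have h2 : v.2.1 = ∑ β, v.2.1 β • (Pi.single β 1 : Fin n → ℝ) := by
    funext γ; simp [Finset.sum_apply, Pi.single_apply]
  have h3 : v.2.2 = ∑ β, ∑ l, v.2.2 β l •
      (Pi.single β (Pi.single l 1) : Fin n → Fin m → ℝ) := by
    funext γ r; simp [Finset.sum_apply, Pi.single_apply, apply_ite (fun f : Fin m → ℝ => f r),
      Finset.sum_ite_eq, Finset.sum_ite_eq']
  have e2 : ((0 : Fin m → ℝ), v.2.1, (0 : Fin n → Fin m → ℝ)) =
      ∑ β, v.2.1 β • ((0 : Fin m → ℝ), (Pi.single β 1 : Fin n → ℝ), (0 : Fin n → Fin m → ℝ)) := by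
    refine Prod.ext ?_ (Prod.ext ?_ ?_) <;>
      simp [Prod.fst_sum, Prod.snd_sum, ← h2]
  have e3 : ((0 : Fin m → ℝ), (0 : Fin n → ℝ), v.2.2) =
      ∑ β, ∑ l, v.2.2 β l • ((0 : Fin m → ℝ), (0 : Fin n → ℝ),
        (Pi.single β (Pi.single l 1) : Fin n → Fin m → ℝ)) := by
    refine Prod.ext ?_ (Prod.ext ?_ ?_) <;>
      simp [Prod.fst_sum, Prod.snd_sum, ← h3]
  conv_lhs => rw [hv]
  rw [map_add, map_add, e2, e3, map_sum]
  simp_rw [map_sum, map_smul, smul_eq_mul]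

lemma bracket_iff {m n : ℕ} (F : Fin m → Fin m → Fin n → JetPt m n → ℝ)
    (hF : ∀ j i α, ContDiff ℝ (⊤ : ℕ∞) (F j i α)) (j k : Fin m) (p : JetPt m n) :
    fderiv ℝ (XSOPDE F k) p (XSOPDE F j p) - fderiv ℝ (XSOPDE F j) p (XSOPDE F k p) = 0 ↔
      (∀ α, F j k α p = F k j α p) ∧
      (∀ α i, fderiv ℝ (F k i α) p (XSOPDE F j p) = fderiv ℝ (F j i α) p (XSOPDE F k p)) := by
  rw [fderiv_XSOPDE F hF k p, fderiv_XSOPDE F hF j p]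
  simp only [XSOPDE, Prod.mk_sub_mk, Prod.mk_eq_zero, sub_self, true_and, funext_iff,
    Pi.sub_apply, Pi.zero_apply, sub_eq_zero]

/-- For the decomposable semi-holonomic multivector field `X = X₁ ∧ … ∧ X_m` with
`X_j = ∂/∂x^j + u_j^α ∂/∂u^α + F_{j,i}^α ∂/∂u_i^α`, the associated distribution
(spanned by the `X_j`) is involutive iff all pairwise Lie brackets `[X_j, X_k]`
vanish, which is expressed in coordinates by: for all `j < k`,
`F_{j,k}^α = F_{k,j}^α` and
`∂F_{k,i}^α/∂x^j + u_j^β ∂F_{k,i}^α/∂u^β + F_{j,l}^β ∂F_{k,i}^α/∂u_l^β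
  − ∂F_{j,i}^α/∂x^k − u_k^β ∂F_{j,i}^α/∂u^β − F_{k,l}^β ∂F_{j,i}^α/∂u_l^β = 0`. -/
theorem stmt_4 {m n : ℕ} (F : Fin m → Fin m → Fin n → JetPt m n → ℝ)
    (hF : ∀ j i α, ContDiff ℝ (⊤ : ℕ∞) (F j i α)) :
    (∀ j k : Fin m, ∀ p : JetPt m n,
      fderiv ℝ (XSOPDE F k) p (XSOPDE F j p) - fderiv ℝ (XSOPDE F j) p (XSOPDE F k p) = 0) ↔
    (∀ j k : Fin m, j < k → ∀ (α : Fin n) (i : Fin m) (p : JetPt m n),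
      F j k α p = F k j α p ∧
      (fderiv ℝ (F k i α) p ((Pi.single j 1 : Fin m → ℝ), 0, 0)
        + (∑ β, p.2.2 β j * fderiv ℝ (F k i α) p (0, (Pi.single β 1 : Fin n → ℝ), 0))
        + (∑ β, ∑ l, F j l β p *
            fderiv ℝ (F k i α) p (0, 0, (Pi.single β (Pi.single l 1) : Fin n → Fin m → ℝ)))
        - fderiv ℝ (F j i α) p ((Pi.single k 1 : Fin m → ℝ), 0, 0)
        - (∑ β, p.2.2 β k * fderiv ℝ (F j i α) p (0, (Pi.single β 1 : Fin n → ℝ), 0))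
        - (∑ β, ∑ l, F k l β p *
            fderiv ℝ (F j i α) p (0, 0, (Pi.single β (Pi.single l 1) : Fin n → Fin m → ℝ)))
        = 0)) := by
  have exp : ∀ (a b : Fin m) (α : Fin n) (i : Fin m) (p : JetPt m n),
      fderiv ℝ (F b i α) p (XSOPDE F a p) =
        fderiv ℝ (F b i α) p ((Pi.single a 1 : Fin m → ℝ), 0, 0)
        + (∑ β, p.2.2 β a * fderiv ℝ (F b i α) p (0, (Pi.single β 1 : Fin n → ℝ), 0))
        + (∑ β, ∑ l, F a l β p *
            fderiv ℝ (F b i α) p (0, 0, (Pi.single β (Pi.single l 1) : Fin n → Fin m → ℝ))) := by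
    intro a b α i p
    have := expandL (fderiv ℝ (F b i α) p) (XSOPDE F a p)
    simpa [XSOPDE] using this
  constructor
  · intro h j k hjk α i p
    obtain ⟨h1, h2⟩ := (bracket_iff F hF j k p).1 (h j k p)
    refine ⟨h1 α, ?_⟩
    have key := h2 α i
    rw [exp j k, exp k j] at key
    linarith
  · intro h j k p
    rw [bracket_iff F hF j k p]
    rcases lt_trichotomy j k with hjk | rfl | hkj
    · refine ⟨fun α => (h j k hjk α j p).1, fun α i => ?_⟩
      have key := (h j k hjk α i p).2
      rw [exp j k, exp k j]
      linarith
    · exact ⟨fun α => rfl, fun α i => rfl⟩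
    · refine ⟨fun α => ((h k j hkj α k p).1).symm, fun α i => ?_⟩
      have key := (h k j hkj α i p).2
      rw [exp j k, exp k j]
      linarith
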